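/- There exists a non-binary bidding game in which every pure subgame-perfect equilibrium is both non-monotone (some player's equilibrium utility strictly decreases when her budget increases) and not Pareto-optimal (for some initial budget partition, the equilibrium outcome is strictly Pareto-dominated by another leaf). -/
import Mathlib


/-- A game tree for two-player bidding games: leaves carry utilities for both players. -/
inductive GTree where
  | leaf : ℝ → ℝ → GTree
  | node : List GTree → GTree

namespace GTree

/-- Height of a game tree. -/
def height : GTree → ℕ
  | .leaf _ _ => 0
  | .node [] => 1
  | .node (c :: cs) => max (1 + height c) (height (.node cs))

/-- The list of leaf payoff pairs of a game tree. -/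
def leaves : GTree → List (ℝ × ℝ)
  | .leaf a b => [(a, b)]
  | .node [] => []
  | .node (c :: cs) => leaves c ++ leaves (.node cs)

/-- Subtree relation. -/
inductive Subtree : GTree → GTree → Prop
  | refl (s : GTree) : Subtree s s
  | step {s c : GTree} {cs : List GTree} : c ∈ cs → Subtree s c → Subtree s (.node cs)

/-- A (Markov) strategy profile: at each subgame and budget of player 1, it gives
the bids `(b1, b2)` of the two players and the indices of the children each player
would move to upon winning the round. -/
abbrev Profile := GTree → ℝ → ℝ × ℝ × ℕ × ℕ

/-- Play with explicit fuel (the height of the tree suffices). The higher bidder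
(ties to player 1) pays her bid to the other player and moves to her chosen child. -/
noncomputable def playAux (γ : Profile) : ℕ → GTree → ℝ → ℝ × ℝ
  | _, .leaf u1 u2, _ => (u1, u2)
  | 0, .node _, _ => (0, 0)
  | n + 1, .node cs, B1 =>
      let a := γ (.node cs) B1
      if a.2.1 ≤ a.1 then
        playAux γ n (cs.getD a.2.2.1 (.leaf 0 0)) (B1 - a.1)
      else
        playAux γ n (cs.getD a.2.2.2 (.leaf 0 0)) (B1 + a.2.1)

/-- The outcome (pair of utilities at the reached leaf) from playing `γ` in `G`
with initial budget `B1` for player 1 (player 2 has `1 - B1`). -/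
noncomputable def outcome (γ : Profile) (G : GTree) (B1 : ℝ) : ℝ × ℝ :=
  playAux γ (height G) G B1

/-- Validity of an action tuple at a node with children `cs` under budget `B1`. -/
def validAct (cs : List GTree) (B1 : ℝ) (a : ℝ × ℝ × ℕ × ℕ) : Prop :=
  0 ≤ a.1 ∧ a.1 ≤ B1 ∧ 0 ≤ a.2.1 ∧ a.2.1 ≤ 1 - B1 ∧
  a.2.2.1 < cs.length ∧ a.2.2.2 < cs.length

/-- Equilibrium conditions for an action tuple `a` at a node with children `cs`,
budget `B1` of player 1, given that play in all subgames follows `γ`: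
each player's designated move is optimal for her; the winner cannot gain by
winning with a different bid (and any move) nor by dropping the round; the loser
cannot gain by overbidding (with any move). -/
def eqAct (γ : Profile) (cs : List GTree) (B1 : ℝ) (a : ℝ × ℝ × ℕ × ℕ) : Prop :=
  let b1 := a.1
  let b2 := a.2.1
  let c1 := cs.getD a.2.2.1 (.leaf 0 0)
  let c2 := cs.getD a.2.2.2 (.leaf 0 0)
  (∀ c ∈ cs, (outcome γ c (B1 - b1)).1 ≤ (outcome γ c1 (B1 - b1)).1) ∧
  (∀ c ∈ cs, (outcome γ c (B1 + b2)).2 ≤ (outcome γ c2 (B1 + b2)).2) ∧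
  (if b2 ≤ b1 then
    (∀ b1', 0 ≤ b1' → b1' ≤ B1 → b2 ≤ b1' → ∀ c ∈ cs,
        (outcome γ c (B1 - b1')).1 ≤ (outcome γ c1 (B1 - b1)).1) ∧
    (0 < b2 → (outcome γ c2 (B1 + b2)).1 ≤ (outcome γ c1 (B1 - b1)).1) ∧
    (∀ b2', b2' ≤ 1 - B1 → b1 < b2' → ∀ c ∈ cs,
        (outcome γ c (B1 + b2')).2 ≤ (outcome γ c1 (B1 - b1)).2)
  else
    (∀ b2', 0 ≤ b2' → b2' ≤ 1 - B1 → b1 < b2' → ∀ c ∈ cs,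
        (outcome γ c (B1 + b2')).2 ≤ (outcome γ c2 (B1 + b2)).2) ∧
    ((outcome γ c1 (B1 - b1)).2 ≤ (outcome γ c2 (B1 + b2)).2) ∧
    (∀ b1', 0 ≤ b1' → b1' ≤ B1 → b2 ≤ b1' → ∀ c ∈ cs,
        (outcome γ c (B1 - b1')).1 ≤ (outcome γ c2 (B1 + b2)).1))

/-- `γ` is a pure subgame-perfect equilibrium of `G`: at every subgame and every
budget partition, the prescribed actions are valid and no player has a profitable
unilateral (one-shot) deviation. -/
def IsPSPE (γ : Profile) (G : GTree) : Prop :=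
  ∀ cs, Subtree (.node cs) G → ∀ B1 : ℝ, 0 ≤ B1 → B1 ≤ 1 →
    validAct cs B1 (γ (.node cs) B1) ∧ eqAct γ cs B1 (γ (.node cs) B1)

/-- Every internal node has at least one child. -/
def WF (G : GTree) : Prop := ∀ cs, Subtree (.node cs) G → cs ≠ []

/-- Every internal node has exactly two children. -/
def IsBinary (G : GTree) : Prop := ∀ cs, Subtree (.node cs) G → cs.length = 2

end GTree

open GTree

section Aux
noncomputable def Gex : GTree := .node [.leaf 0 1, .node [.leaf 2 0, .leaf 1 2], .leaf 2 0]

lemma playAux_leaf (γ : Profile) (n : ℕ) (u v B : ℝ) : playAux γ n (.leaf u v) B = (u, v) := by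
  cases n <;> rfl

lemma playAux_node (γ : Profile) (n : ℕ) (cs : List GTree) (B1 : ℝ) :
    playAux γ (n+1) (.node cs) B1 =
      if (γ (.node cs) B1).2.1 ≤ (γ (.node cs) B1).1 then
        playAux γ n (cs.getD (γ (.node cs) B1).2.2.1 (.leaf 0 0)) (B1 - (γ (.node cs) B1).1)
      else
        playAux γ n (cs.getD (γ (.node cs) B1).2.2.2 (.leaf 0 0)) (B1 + (γ (.node cs) B1).2.1) := rfl

lemma outcome_leaf (γ : Profile) (u v B : ℝ) : outcome γ (.leaf u v) B = (u, v) := by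
  rw [outcome]; exact playAux_leaf _ _ _ _ _

lemma outcome_H (γ : Profile) (x : ℝ) :
    outcome γ (.node [.leaf 2 0, .leaf 1 2]) x =
      if (γ (.node [.leaf 2 0, .leaf 1 2]) x).2.1 ≤ (γ (.node [.leaf 2 0, .leaf 1 2]) x).1 then
        playAux γ 0 ([GTree.leaf 2 0, .leaf 1 2].getD (γ (.node [.leaf 2 0, .leaf 1 2]) x).2.2.1 (.leaf 0 0))
          (x - (γ (.node [.leaf 2 0, .leaf 1 2]) x).1)
      else
        playAux γ 0 ([GTree.leaf 2 0, .leaf 1 2].getD (γ (.node [.leaf 2 0, .leaf 1 2]) x).2.2.2 (.leaf 0 0))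
          (x + (γ (.node [.leaf 2 0, .leaf 1 2]) x).2.1) := by
  have h : height (.node [GTree.leaf 2 0, .leaf 1 2]) = 1 := by simp [height]
  rw [outcome, h, playAux_node]

lemma hsubH : Subtree (.node [GTree.leaf 2 0, .leaf 1 2]) Gex :=
  Subtree.step (cs := [.leaf 0 1, .node [.leaf 2 0, .leaf 1 2], .leaf 2 0]) (by simp) (Subtree.refl _)

lemma outH (γ : Profile) (hγ : IsPSPE γ Gex) (x : ℝ) (h0 : 0 ≤ x) (h1 : x ≤ 1) :
    outcome γ (.node [.leaf 2 0, .leaf 1 2]) x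
      = if (1:ℝ)/2 ≤ x then ((2:ℝ), (0:ℝ)) else (1, 2) := by
  obtain ⟨hv, he⟩ := hγ [.leaf 2 0, .leaf 1 2] hsubH x h0 h1
  obtain ⟨hb10, hb11, hb20, hb21, hi, hj⟩ := hv
  obtain ⟨hc1, hc2, hb⟩ := he
  simp only [List.length_cons, List.length_nil] at hi hj
  rw [outcome_H]
  by_cases hw : (γ (.node [.leaf 2 0, .leaf 1 2]) x).2.1 ≤ (γ (.node [.leaf 2 0, .leaf 1 2]) x).1
  · rw [if_pos hw] at hb ⊢
    obtain ⟨h3a, h3b, h3c⟩ := hb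
    -- force i = 0
    have hA := hc1 (.leaf 2 0) (by simp)
    rcases e : (γ (.node [.leaf 2 0, .leaf 1 2]) x).2.2.1 with _ | i
    · -- i = 0, c1 = leaf 2 0 ; show 1/2 ≤ x
      have hx : (1:ℝ)/2 ≤ x := by
        by_contra hlt
        push_neg at hlt
        have := h3c (1 - x) (by linarith) (by linarith) (.leaf 1 2) (by simp)
        try rw [e] at this
        simp [outcome_leaf] at this
        try norm_num at this
        try linarith
      rw [if_pos hx]
      simp [playAux_leaf]
    · -- i ≥ 1, must be 1: contradiction with hA
      rw [e] at hA hi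
      have hi1 : i = 0 := by omega
      subst hi1
      simp only [outcome_leaf, List.getD_cons_succ, List.getD_cons_zero] at hA
      norm_num at hA
  · rw [if_neg hw] at hb ⊢
    push_neg at hw
    obtain ⟨h3a, h3b, h3c⟩ := hb
    have hB := hc2 (.leaf 1 2) (by simp)
    rcases e : (γ (.node [.leaf 2 0, .leaf 1 2]) x).2.2.2 with _ | j
    · rw [e] at hB
      simp only [outcome_leaf, List.getD_cons_zero] at hB
      norm_num at hB
    · try rw [e] at hj
      try rw [e]
      have hj1 : j = 0 := by omega
      subst hj1
      have hx : ¬ ((1:ℝ)/2 ≤ x) := by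
        intro hge
        have := h3c (γ (.node [.leaf 2 0, .leaf 1 2]) x).2.1 hb20 (by linarith) le_rfl (.leaf 2 0) (by simp)
        try rw [e] at this
        simp [outcome_leaf] at this
        try norm_num at this
        try linarith
      rw [if_neg hx]
      simp [playAux_leaf]
lemma Gex_def : Gex = .node [.leaf 0 1, .node [.leaf 2 0, .leaf 1 2], .leaf 2 0] := rfl

lemma hsubG : Subtree (.node [GTree.leaf 0 1, .node [.leaf 2 0, .leaf 1 2], .leaf 2 0]) Gex := by
  rw [Gex_def]; exact Subtree.refl _

lemma playAux_one_H (γ : Profile) (y : ℝ) :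
    playAux γ 1 (.node [.leaf 2 0, .leaf 1 2]) y = outcome γ (.node [.leaf 2 0, .leaf 1 2]) y := by
  have h : height (.node [GTree.leaf 2 0, .leaf 1 2]) = 1 := by simp [height]
  rw [outcome, h]

lemma outcome_root (γ : Profile) (B1 : ℝ) :
    outcome γ Gex B1 =
      (let L : List GTree := [.leaf 0 1, .node [.leaf 2 0, .leaf 1 2], .leaf 2 0]
      if (γ (.node L) B1).2.1 ≤ (γ (.node L) B1).1 then
        playAux γ 1 (L.getD (γ (.node L) B1).2.2.1 (.leaf 0 0)) (B1 - (γ (.node L) B1).1)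
      else
        playAux γ 1 (L.getD (γ (.node L) B1).2.2.2 (.leaf 0 0)) (B1 + (γ (.node L) B1).2.1)) := by
  have h : height Gex = 2 := by simp [Gex, height]
  rw [outcome, h, Gex_def, playAux_node]

lemma out0 (γ : Profile) (hγ : IsPSPE γ Gex) : outcome γ Gex 0 = (1, 2) := by
  obtain ⟨hv, he⟩ := hγ [.leaf 0 1, .node [.leaf 2 0, .leaf 1 2], .leaf 2 0] hsubG 0 le_rfl (by norm_num)
  obtain ⟨hb10, hb11, hb20, hb21, hi, hj⟩ := hv
  obtain ⟨hc1, hc2, hb⟩ := he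
  simp only [List.length_cons, List.length_nil] at hi hj
  have hb1 : (γ (.node [GTree.leaf 0 1, .node [.leaf 2 0, .leaf 1 2], .leaf 2 0]) 0).1 = 0 :=
    le_antisymm hb11 hb10
  rw [outcome_root]
  by_cases hw : (γ (.node [GTree.leaf 0 1, .node [.leaf 2 0, .leaf 1 2], .leaf 2 0]) 0).2.1
      ≤ (γ (.node [GTree.leaf 0 1, .node [.leaf 2 0, .leaf 1 2], .leaf 2 0]) 0).1
  · exfalso
    rw [if_pos hw] at hb
    obtain ⟨h3a, h3b, h3c⟩ := hb
    have hA := hc1 (.leaf 2 0) (by simp)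
    have hH14 := outH γ hγ (0 + 1/4) (by norm_num) (by norm_num)
    rw [if_neg (by norm_num)] at hH14
    rcases e : (γ (.node [GTree.leaf 0 1, .node [.leaf 2 0, .leaf 1 2], .leaf 2 0]) 0).2.2.1 with _ | _ | i
    · try rw [e] at hA
      simp [outcome_leaf] at hA
      linarith
    · try rw [e] at hA
      rw [hb1] at hA
      simp only [List.getD_cons_succ, List.getD_cons_zero, outcome_leaf] at hA
      have h0' := outH γ hγ (0 - 0) (by norm_num) (by norm_num)
      rw [if_neg (by norm_num)] at h0'
      rw [h0'] at hA
      norm_num at hA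
    · have hi2 : i = 0 := by omega
      subst hi2
      have := h3c (1/4) (by norm_num) (by rw [hb1]; norm_num) (.node [.leaf 2 0, .leaf 1 2]) (by simp)
      try rw [e] at this
      rw [hH14] at this
      simp [outcome_leaf] at this
      linarith
  · rw [if_neg hw]
    push_neg at hw
    rw [hb1] at hw
    rw [if_neg (by push_neg; rw [hb1]; exact hw)] at hb
    obtain ⟨h3a, h3b, h3c⟩ := hb
    by_cases hhalf : 1/2 ≤ (γ (.node [GTree.leaf 0 1, .node [.leaf 2 0, .leaf 1 2], .leaf 2 0]) 0).2.1
    · exfalso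
      have hH14 := outH γ hγ (0 + 1/4) (by norm_num) (by norm_num)
      rw [if_neg (by norm_num)] at hH14
      have := h3a (1/4) (by norm_num) (by norm_num) (by rw [hb1]; norm_num)
        (.node [.leaf 2 0, .leaf 1 2]) (by simp)
      rw [hH14] at this
      have hHb2 := outH γ hγ (0 + (γ (.node [GTree.leaf 0 1, .node [.leaf 2 0, .leaf 1 2], .leaf 2 0]) 0).2.1)
        (by linarith) (by linarith)
      rw [if_pos (by linarith)] at hHb2
      rcases e : (γ (.node [GTree.leaf 0 1, .node [.leaf 2 0, .leaf 1 2], .leaf 2 0]) 0).2.2.2 with _ | _ | j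
      · try rw [e] at this
        simp [outcome_leaf] at this
        try linarith
      · try rw [e] at this
        simp only [List.getD_cons_succ, List.getD_cons_zero] at this
        rw [hHb2] at this
        norm_num at this
      · try rw [e] at hj
        have hj2 : j = 0 := by omega
        subst hj2
        try rw [e] at this
        simp [outcome_leaf] at this
        try linarith
    · push_neg at hhalf
      have hHb2 := outH γ hγ (0 + (γ (.node [GTree.leaf 0 1, .node [.leaf 2 0, .leaf 1 2], .leaf 2 0]) 0).2.1)
        (by linarith) (by linarith)
      rw [if_neg (by push_neg; linarith)] at hHb2
      have hB := hc2 (.node [.leaf 2 0, .leaf 1 2]) (by simp)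
      rw [hHb2] at hB
      rcases e : (γ (.node [GTree.leaf 0 1, .node [.leaf 2 0, .leaf 1 2], .leaf 2 0]) 0).2.2.2 with _ | _ | j
      · exfalso
        try rw [e] at hB
        simp [outcome_leaf] at hB
        try linarith
      · try rw [e]
        simp only [List.getD_cons_succ, List.getD_cons_zero]
        rw [playAux_one_H, hHb2]
      · exfalso
        have hj2 : j = 0 := by omega
        subst hj2
        try rw [e] at hB
        simp [outcome_leaf] at hB
        linarith
lemma outq (γ : Profile) (hγ : IsPSPE γ Gex) : outcome γ Gex (1/4) = (0, 1) := by
  obtain ⟨hv, he⟩ := hγ [.leaf 0 1, .node [.leaf 2 0, .leaf 1 2], .leaf 2 0] hsubG (1/4)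
    (by norm_num) (by norm_num)
  obtain ⟨hb10, hb11, hb20, hb21, hi, hj⟩ := hv
  obtain ⟨hc1, hc2, hb⟩ := he
  simp only [List.length_cons, List.length_nil] at hi hj
  norm_num at hb21 hb11
  rw [outcome_root]
  by_cases hw : (γ (.node [GTree.leaf 0 1, .node [.leaf 2 0, .leaf 1 2], .leaf 2 0]) (1/4)).2.1
      ≤ (γ (.node [GTree.leaf 0 1, .node [.leaf 2 0, .leaf 1 2], .leaf 2 0]) (1/4)).1
  · exfalso
    rw [if_pos hw] at hb
    obtain ⟨h3a, h3b, h3c⟩ := hb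
    have hA := hc1 (.leaf 2 0) (by simp)
    rcases e : (γ (.node [GTree.leaf 0 1, .node [.leaf 2 0, .leaf 1 2], .leaf 2 0]) (1/4)).2.2.1 with _ | _ | i
    · try rw [e] at hA
      simp [outcome_leaf] at hA
      try linarith
    · have hHx := outH γ hγ (1/4 - (γ (.node [GTree.leaf 0 1, .node [.leaf 2 0, .leaf 1 2], .leaf 2 0]) (1/4)).1)
        (by linarith) (by linarith)
      rw [if_neg (by push_neg; linarith)] at hHx
      try rw [e] at hA
      simp only [List.getD_cons_succ, List.getD_cons_zero] at hA
      rw [hHx] at hA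
      simp [outcome_leaf] at hA
      try linarith
    · try rw [e] at hi
      have hi2 : i = 0 := by omega
      subst hi2
      have := h3c (1/2) (by norm_num) (by linarith) (.leaf 0 1) (by simp)
      try rw [e] at this
      simp [outcome_leaf] at this
      try linarith
  · rw [if_neg hw] at hb ⊢
    push_neg at hw
    obtain ⟨h3a, h3b, h3c⟩ := hb
    by_cases hq : 1/4 ≤ (γ (.node [GTree.leaf 0 1, .node [.leaf 2 0, .leaf 1 2], .leaf 2 0]) (1/4)).2.1
    · have hB := hc2 (.leaf 0 1) (by simp)
      rcases e : (γ (.node [GTree.leaf 0 1, .node [.leaf 2 0, .leaf 1 2], .leaf 2 0]) (1/4)).2.2.2 with _ | _ | j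
      · try rw [e]
        simp only [List.getD_cons_zero]
        rw [playAux_leaf]
      · exfalso
        have hHx := outH γ hγ (1/4 + (γ (.node [GTree.leaf 0 1, .node [.leaf 2 0, .leaf 1 2], .leaf 2 0]) (1/4)).2.1)
          (by linarith) (by linarith)
        rw [if_pos (by linarith)] at hHx
        try rw [e] at hB
        simp only [List.getD_cons_succ, List.getD_cons_zero] at hB
        rw [hHx] at hB
        simp [outcome_leaf] at hB
        try linarith
      · exfalso
        try rw [e] at hj
        have hj2 : j = 0 := by omega
        subst hj2
        try rw [e] at hB
        simp [outcome_leaf] at hB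
        try linarith
    · exfalso
      push_neg at hq
      have hHx := outH γ hγ (1/4 + (γ (.node [GTree.leaf 0 1, .node [.leaf 2 0, .leaf 1 2], .leaf 2 0]) (1/4)).2.1)
        (by linarith) (by linarith)
      rw [if_neg (by push_neg; linarith)] at hHx
      have hB := hc2 (.node [.leaf 2 0, .leaf 1 2]) (by simp)
      rw [hHx] at hB
      rcases e : (γ (.node [GTree.leaf 0 1, .node [.leaf 2 0, .leaf 1 2], .leaf 2 0]) (1/4)).2.2.2 with _ | _ | j
      · try rw [e] at hB
        simp [outcome_leaf] at hB
        try linarith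
      · have := h3c (γ (.node [GTree.leaf 0 1, .node [.leaf 2 0, .leaf 1 2], .leaf 2 0]) (1/4)).2.1
          hb20 (by linarith) le_rfl (.leaf 2 0) (by simp)
        try rw [e] at this
        simp only [List.getD_cons_succ, List.getD_cons_zero] at this
        rw [hHx] at this
        simp [outcome_leaf] at this
        try linarith
      · try rw [e] at hj
        have hj2 : j = 0 := by omega
        subst hj2
        try rw [e] at hB
        simp [outcome_leaf] at hB
        try linarith
lemma sub_inv {cs : List GTree} (h : Subtree (.node cs) Gex) :
    cs = [.leaf 0 1, .node [.leaf 2 0, .leaf 1 2], .leaf 2 0] ∨ cs = [.leaf 2 0, .leaf 1 2] := by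
  rw [Gex_def] at h
  cases h with
  | refl => left; rfl
  | step hm hsub =>
    simp only [List.mem_cons, List.not_mem_nil, or_false] at hm
    rcases hm with rfl | rfl | rfl
    · cases hsub
    · cases hsub with
      | refl => right; rfl
      | step hm' hsub' =>
        simp only [List.mem_cons, List.not_mem_nil, or_false] at hm'
        rcases hm' with rfl | rfl <;> cases hsub'
    · cases hsub

theorem stmt5' :
    ∃ G : GTree, WF G ∧ (∃ cs, Subtree (.node cs) G ∧ 2 < cs.length) ∧
      ∀ γ : Profile, IsPSPE γ G →
        (∃ B1 ∈ Set.Icc (0 : ℝ) 1, ∃ B1' ∈ Set.Icc (0 : ℝ) 1, B1 < B1' ∧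
          ((outcome γ G B1').1 < (outcome γ G B1).1 ∨
           (outcome γ G B1).2 < (outcome γ G B1').2)) ∧
        (∃ B1 ∈ Set.Icc (0 : ℝ) 1, ∃ t' ∈ leaves G,
          (outcome γ G B1).1 ≤ t'.1 ∧ (outcome γ G B1).2 ≤ t'.2 ∧
          ((outcome γ G B1).1 < t'.1 ∨ (outcome γ G B1).2 < t'.2)) := by
  refine ⟨Gex, ?_, ⟨[.leaf 0 1, .node [.leaf 2 0, .leaf 1 2], .leaf 2 0], hsubG, by simp⟩, ?_⟩
  · intro cs h
    rcases sub_inv h with rfl | rfl <;> simp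
  · intro γ hγ
    constructor
    · refine ⟨0, by simp, 1/4, by norm_num [Set.mem_Icc], by norm_num, Or.inl ?_⟩
      rw [out0 γ hγ, outq γ hγ]
      norm_num
    · refine ⟨1/4, by norm_num [Set.mem_Icc], (1, 2), ?_, ?_⟩
      · show _ ∈ leaves Gex
        rw [Gex_def]
        simp [leaves]
      · rw [outq γ hγ]
        norm_num
end Aux

/-- There exists a non-binary bidding game (some node has more
than two children) in which every pure subgame-perfect equilibrium both violates
monotonicity (some player's equilibrium utility strictly decreases when her budget
increases) and is not Pareto-optimal (for some initial budget partition the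
equilibrium outcome is strictly Pareto-dominated by another leaf: the other leaf is
weakly better for both players and strictly better for one). -/
theorem stmt5 :
    ∃ G : GTree, WF G ∧ (∃ cs, Subtree (.node cs) G ∧ 2 < cs.length) ∧
      ∀ γ : Profile, IsPSPE γ G →
        -- non-monotone: some budget increase strictly hurts a player
        (∃ B1 ∈ Set.Icc (0 : ℝ) 1, ∃ B1' ∈ Set.Icc (0 : ℝ) 1, B1 < B1' ∧
          ((outcome γ G B1').1 < (outcome γ G B1).1 ∨
           (outcome γ G B1).2 < (outcome γ G B1').2)) ∧
        -- not Pareto-optimal: some outcome is strictly Pareto-dominated by a leaf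
        (∃ B1 ∈ Set.Icc (0 : ℝ) 1, ∃ t' ∈ leaves G,
          (outcome γ G B1).1 ≤ t'.1 ∧ (outcome γ G B1).2 ≤ t'.2 ∧
          ((outcome γ G B1).1 < t'.1 ∨ (outcome γ G B1).2 < t'.2)) := by
  exact stmt5'
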